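/- arXiv:2410.04502 — 2 statements merged into one kernel-verified Lean document; each statement's English description precedes it below -/
import Mathlib

section
/- Fix n ≥ 1 and work in U = U_q(A(0,2)^{(4)})^+. If [L_j, L₁²] = 0 (plain commutator) for every 1 ≤ j ≤ n−2, then [X_{2k+1}, Y_{n−2k}] = L_n for every integer k with 0 ≤ k ≤ (n−1)/2, and [X_{2k+2}, Y_{n−2k−1}] = L_n′ for every integer k with 0 ≤ k ≤ (n−2)/2 (here the brackets are braided brackets of the homogeneous elements indicated). -/
/-!
The braiding signs in the recursions for `X` and `Y` alternate, so two steps of them give plain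
commutators with `L₁²`: `X_{a+2} = [X_a, L₁²]` and `Y_{b+2} = [L₁², Y_b]`.
As `[·, L₁²]` is a derivation, for every scalar `σ`
`[X_{a+2}, Y_b]_σ = [X_a, Y_{b+2}]_σ + [[X_a, Y_b]_σ, L₁²]`,
so two units of degree move from `Y` to `X` whenever `[X_a, Y_b]_σ` commutes with `L₁²`.
Starting from `L_n = [X₁, Y_n]` and `L_n′ = [X₂, Y_{n-1}]`, induction on `k` shows that the
brackets met along the way are `L_j` and `L_j′` with `j ≤ n - 2`; the former commute with `L₁²`
by hypothesis, and so do the latter because `L_j′ = L_j + (-1)^(j-1) L_{j-1}L₁ - L₁L_{j-1}`.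
-/
noncomputable section

namespace QAff

abbrev F : Type := FreeAlgebra ℂ (Fin 2)

def x1 : F := FreeAlgebra.ι ℂ 0
def x2 : F := FreeAlgebra.ι ℂ 1

def θ (q : ℂ) : ℂ := q - q⁻¹

def L1F (q : ℂ) : F := x1 * x2 - q⁻¹ • (x2 * x1)

def X2F (q : ℂ) : F := x1 * L1F q - L1F q * x1

def Y2F (q : ℂ) : F := L1F q * x2 + x2 * L1F q

/-- the quantum Serre relator `[x₁,[x₁,[x₁,x₂]]]` (braided brackets w.r.t. the bicharacter
`χ((a,b),(c,d)) = (-1)^(bd) q^(ac-ad-bc+bd)`). -/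
def serre1 (q : ℂ) : F := x1 * X2F q - q • (X2F q * x1)

/-- the quantum Serre relator `[[[x₁,x₂],x₂],x₂]` (braided brackets). -/
def serre2 (q : ℂ) : F := Y2F q * x2 - q • (x2 * Y2F q)

inductive Rel (q : ℂ) : F → F → Prop
  | one : Rel q (serre1 q) 0
  | two : Rel q (serre2 q) 0

/-- `U = U_q(A(0,2)^{(4)})^+`, the free algebra on `x₁, x₂` modulo the two-sided ideal
generated by the quantum Serre relators. -/
abbrev U (q : ℂ) : Type := RingQuot (Rel q)

def π (q : ℂ) : F →ₐ[ℂ] U q := RingQuot.mkAlgHom ℂ (Rel q)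

/-- `L₁ = [X₁,Y₁] = x₁x₂ - q⁻¹ x₂x₁` in `U`. -/
def L1U (q : ℂ) : U q := π q x1 * π q x2 - q⁻¹ • (π q x2 * π q x1)

/-- real root vectors `X_n`, `n ≥ 1` (`X 0 := 0` is junk):
`X₁ = x₁`, `X_{n+1} = [X_n, L₁] = X_n L₁ - (-1)^(n-1) L₁ X_n`
(the braiding scalar is `χ((n,n-1),(1,1)) = (-1)^(n-1)`). -/
def X (q : ℂ) : ℕ → U q
  | 0 => 0
  | 1 => π q x1
  | (n+2) => X q (n+1) * L1U q - ((-1 : ℂ)^n) • (L1U q * X q (n+1))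

/-- real root vectors `Y_n`, `n ≥ 1` (`Y 0 := 0` is junk):
`Y₁ = x₂`, `Y_{n+1} = [L₁, Y_n] = L₁ Y_n - (-1)^n Y_n L₁`
(the braiding scalar is `χ((1,1),(n-1,n)) = (-1)^n`). -/
def Y (q : ℂ) : ℕ → U q
  | 0 => 0
  | 1 => π q x2
  | (n+2) => L1U q * Y q (n+1) - ((-1 : ℂ)^(n+1)) • (Y q (n+1) * L1U q)

/-- `L₀ = θ⁻¹·1`, and `L_n = [X₁, Y_n] = X₁Y_n - q⁻¹ Y_n X₁` for `n ≥ 1`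
(the braiding scalar is `χ((1,0),(n-1,n)) = q⁻¹`). -/
def L (q : ℂ) : ℕ → U q
  | 0 => (θ q)⁻¹ • 1
  | (n+1) => X q 1 * Y q (n+1) - q⁻¹ • (Y q (n+1) * X q 1)

/-- `L₀′ = θ⁻¹·1`, `L₁′ = L₁`, and
`L_n′ = [X₂, Y_{n-1}] = X₂Y_{n-1} - (-1)^(n-1) q⁻¹ Y_{n-1}X₂` for `n ≥ 2`
(the braiding scalar is `χ((2,1),(n-2,n-1)) = (-1)^(n-1) q⁻¹`). -/
def L' (q : ℂ) : ℕ → U q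
  | 0 => (θ q)⁻¹ • 1
  | 1 => L q 1
  | (n+2) => X q 2 * Y q (n+1) - ((-1 : ℂ)^(n+1) * q⁻¹) • (Y q (n+1) * X q 2)

/-- `M q n` is the element `M_{2n+1}`:  `M₁ = L₁`, `M_{2n+1} = [L₂, M_{2n-1}]`
(a plain commutator, the braiding scalar being `1`). -/
def M (q : ℂ) : ℕ → U q
  | 0 => L q 1
  | (n+1) => L q 2 * M q n - M q n * L q 2

/-- `L̃_n = (L_n + L_n′)/2`, with the convention `L̃_n = 0` for `n < 0`
(note `L̃₀ = θ⁻¹·1`). -/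
def Lt (q : ℂ) (n : ℤ) : U q :=
  if 0 ≤ n then ((2 : ℂ)⁻¹) • (L q n.toNat + L' q n.toNat) else 0

/-- `L̂_{n+1} = [L_n, L₁] = L_n L₁ - (-1)^n L₁ L_n`
(the braiding scalar is `χ((n,n),(1,1)) = (-1)^n`); in particular `L̂₁ = 0`. -/
def Lhat (q : ℂ) : ℕ → U q
  | 0 => 0
  | (n+1) => L q n * L q 1 - ((-1 : ℂ)^n) • (L q 1 * L q n)

/-- the sequence `P₀ = 1`, `P_n = q^n + q^(n-1) + (-1)^(n-1) P_(n-1)`. -/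
def P (q : ℂ) : ℕ → ℂ
  | 0 => 1
  | (n+1) => q^(n+1) + q^n + (-1 : ℂ)^n * P q n

/-- the sequence `Q₀ = 1`, `Q_n = q^n - q^(n-1) + (-1)^n Q_(n-1)`. -/
def Q (q : ℂ) : ℕ → ℂ
  | 0 => 1
  | (n+1) => q^(n+1) - q^n + (-1 : ℂ)^(n+1) * Q q n

/-- `q` is not a root of unity. -/
def NotRootOfUnity (q : ℂ) : Prop := ∀ n : ℕ, n ≠ 0 → q ^ n ≠ 1

end QAff

def qBracket {R A : Type*} [CommSemiring R] [Ring A] [Algebra R A] (σ : R) (u v : A) : A :=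
  u * v - σ • (v * u)

section qBracket

variable {R A : Type*} [CommSemiring R] [Ring A] [Algebra R A]

theorem qBracket_lie_left_eq (σ : R) (u v ℓ : A) :
    qBracket σ ⁅u, ℓ⁆ v = qBracket σ u ⁅ℓ, v⁆ + ⁅qBracket σ u v, ℓ⁆ := by
  simp only [qBracket, Ring.lie_def, mul_sub, sub_mul, smul_sub, smul_mul_assoc, mul_smul_comm,
    mul_assoc]
  abel

theorem Commute.qBracket_lie_left {σ : R} {u v ℓ : A} (h : Commute (qBracket σ u v) ℓ) :
    qBracket σ ⁅u, ℓ⁆ v = qBracket σ u ⁅ℓ, v⁆ := by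
  rw [qBracket_lie_left_eq, commute_iff_lie_eq.mp h, add_zero]

end qBracket

namespace QAff

variable (q : ℂ)

theorem X_add_three (a : ℕ) : X q (a + 3) = ⁅X q (a + 1), L q 1 ^ 2⁆ := by
  have e2 : X q (a + 2) = X q (a + 1) * L q 1 - ((-1 : ℂ) ^ a) • (L q 1 * X q (a + 1)) := rfl
  have e3 : X q (a + 3) = X q (a + 2) * L q 1 - ((-1 : ℂ) ^ (a + 1)) • (L q 1 * X q (a + 2)) :=
    rfl
  rw [e3, e2, Ring.lie_def]
  rcases Nat.even_or_odd a with ha | ha <;>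
    simp only [ha.neg_one_pow, ha.add_one.neg_one_pow, pow_two, mul_sub, sub_mul, smul_sub,
      smul_mul_assoc, mul_smul_comm, mul_assoc] <;>
    module

theorem Y_add_three (b : ℕ) : Y q (b + 3) = ⁅L q 1 ^ 2, Y q (b + 1)⁆ := by
  have e2 : Y q (b + 2) = L q 1 * Y q (b + 1) - ((-1 : ℂ) ^ (b + 1)) • (Y q (b + 1) * L q 1) :=
    rfl
  have e3 : Y q (b + 3) = L q 1 * Y q (b + 2) - ((-1 : ℂ) ^ (b + 1 + 1)) • (Y q (b + 2) * L q 1) :=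
    rfl
  rw [e3, e2, Ring.lie_def]
  rcases Nat.even_or_odd b with hb | hb <;>
    simp only [hb.add_one.neg_one_pow, hb.add_one.add_one.neg_one_pow, pow_two,
      mul_sub, sub_mul, smul_sub, smul_mul_assoc, mul_smul_comm, mul_assoc] <;>
    module

theorem qBracket_X_add_two_Y {σ : ℂ} {a b : ℕ} (ha : 1 ≤ a) (hb : 1 ≤ b)
    (h : Commute (qBracket σ (X q a) (Y q b)) (L q 1 ^ 2)) :
    qBracket σ (X q (a + 2)) (Y q b) = qBracket σ (X q a) (Y q (b + 2)) := by
  obtain ⟨a, rfl⟩ : ∃ a', a = a' + 1 := ⟨a - 1, by omega⟩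
  obtain ⟨b, rfl⟩ : ∃ b', b = b' + 1 := ⟨b - 1, by omega⟩
  rw [X_add_three, Y_add_three]
  exact h.qBracket_lie_left

theorem L'_add_two (i : ℕ) :
    L' q (i + 2) =
      L q (i + 2) + ((-1 : ℂ) ^ (i + 1)) • (L q (i + 1) * L q 1) - L q 1 * L q (i + 1) := by
  have e1 : L' q (i + 2) =
      X q 2 * Y q (i + 1) - ((-1 : ℂ) ^ (i + 1) * q⁻¹) • (Y q (i + 1) * X q 2) := rfl
  have e2 : X q 2 = X q 1 * L q 1 - ((-1 : ℂ) ^ 0) • (L q 1 * X q 1) := rfl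
  have e3 : L q (i + 2) = X q 1 * Y q (i + 2) - q⁻¹ • (Y q (i + 2) * X q 1) := rfl
  have e4 : Y q (i + 2) = L q 1 * Y q (i + 1) - ((-1 : ℂ) ^ (i + 1)) • (Y q (i + 1) * L q 1) := rfl
  have e5 : L q (i + 1) = X q 1 * Y q (i + 1) - q⁻¹ • (Y q (i + 1) * X q 1) := rfl
  rw [e1, e2, e3, e4, e5]
  simp only [mul_sub, sub_mul, smul_sub, smul_mul_assoc, mul_smul_comm, mul_assoc, smul_smul,
    pow_zero, one_smul]
  module

theorem commute_L'_add_two {i : ℕ} (hA : Commute (L q (i + 2)) (L q 1 ^ 2))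
    (hB : Commute (L q (i + 1)) (L q 1 ^ 2)) : Commute (L' q (i + 2)) (L q 1 ^ 2) := by
  have hC : Commute (L q 1) (L q 1 ^ 2) := Commute.self_pow _ 2
  rw [L'_add_two]
  exact (hA.add_left ((hB.mul_left hC).smul_left _)).sub_left (hC.mul_left hB)

theorem qBracket_X_odd_Y (k : ℕ) : ∀ p : ℕ, 1 ≤ p →
    (∀ j, 1 ≤ j → j + 2 ≤ 2 * k + p → Commute (L q j) (L q 1 ^ 2)) →
    qBracket q⁻¹ (X q (2 * k + 1)) (Y q p) = L q (2 * k + p) := by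
  induction k with
  | zero =>
    rintro (_ | i) hp -
    · omega
    · simp only [Nat.mul_zero, zero_add]
      rfl
  | succ k ih =>
    intro p hp h
    have hL : qBracket q⁻¹ (X q (2 * k + 1)) (Y q p) = L q (2 * k + p) :=
      ih p hp fun j h1 h2 => h j h1 (by omega)
    have hcomm : Commute (qBracket q⁻¹ (X q (2 * k + 1)) (Y q p)) (L q 1 ^ 2) :=
      hL ▸ h _ (by omega) (by omega)
    rw [show 2 * (k + 1) + 1 = 2 * k + 1 + 2 by ring, qBracket_X_add_two_Y q (by omega) hp hcomm,
      ih (p + 2) (by omega) fun j h1 h2 => h j h1 (by omega)]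
    ring_nf

theorem qBracket_X_even_Y (k : ℕ) : ∀ p : ℕ, 1 ≤ p →
    (∀ j, 1 ≤ j → j + 2 ≤ 2 * k + 1 + p → Commute (L q j) (L q 1 ^ 2)) →
    qBracket ((-1 : ℂ) ^ p * q⁻¹) (X q (2 * k + 2)) (Y q p) = L' q (2 * k + 1 + p) := by
  induction k with
  | zero =>
    rintro (_ | i) hp -
    · omega
    · simp only [Nat.mul_zero, zero_add, Nat.add_comm 1]
      rfl
  | succ k ih =>
    intro p hp h
    have hL' : qBracket ((-1 : ℂ) ^ p * q⁻¹) (X q (2 * k + 2)) (Y q p) = L' q (2 * k + 1 + p) :=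
      ih p hp fun j h1 h2 => h j h1 (by omega)
    obtain ⟨i, hi⟩ : ∃ i, 2 * k + 1 + p = i + 2 := ⟨2 * k + p - 1, by omega⟩
    have hcomm :
        Commute (qBracket ((-1 : ℂ) ^ p * q⁻¹) (X q (2 * k + 2)) (Y q p)) (L q 1 ^ 2) := by
      rw [hL', hi]
      exact commute_L'_add_two q (h _ (by omega) (by omega)) (h _ (by omega) (by omega))
    have hsign : (-1 : ℂ) ^ p = (-1) ^ (p + 2) := by rw [pow_add, neg_one_sq, mul_one]
    rw [show 2 * (k + 1) + 2 = 2 * k + 2 + 2 by ring, qBracket_X_add_two_Y q (by omega) hp hcomm,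
      hsign, ih (p + 2) (by omega) fun j h1 h2 => h j h1 (by omega)]
    ring_nf

end QAff

open QAff

theorem stmt2_general (q : ℂ) (n : ℕ)
    (h : ∀ j : ℕ, 1 ≤ j → j ≤ n - 2 → L q j * (L q 1)^2 = (L q 1)^2 * L q j) :
    (∀ k : ℕ, 2*k+1 ≤ n →
      X q (2*k+1) * Y q (n - 2*k) - q⁻¹ • (Y q (n - 2*k) * X q (2*k+1)) = L q n) ∧
    (∀ k : ℕ, 2*k+2 ≤ n →
      X q (2*k+2) * Y q (n - 2*k - 1) - ((-1 : ℂ)^(n-1) * q⁻¹) • (Y q (n - 2*k - 1) * X q (2*k+2))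
        = L' q n) := by
  refine ⟨fun k hk => ?_, fun k hk => ?_⟩
  · have hn : 2 * k + (n - 2 * k) = n := by omega
    have := qBracket_X_odd_Y q k (n - 2 * k) (by omega) fun j h1 h2 => h j h1 (by omega)
    rwa [hn] at this
  · have hn : 2 * k + 1 + (n - 2 * k - 1) = n := by omega
    have hsign : (-1 : ℂ) ^ (n - 1) = (-1) ^ (n - 2 * k - 1) := by
      rw [show n - 1 = 2 * k + (n - 2 * k - 1) by omega, pow_add, pow_mul, neg_one_sq, one_pow,
        one_mul]
    have := qBracket_X_even_Y q k (n - 2 * k - 1) (by omega) fun j h1 h2 => h j h1 (by omega)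
    rwa [hn, ← hsign] at this

/-- In `U = U_q(A(0,2)^{(4)})^+`: fix `n ≥ 1`; if `[L_j, L₁²] = 0` for all `1 ≤ j ≤ n-2`, then
`[X_{2k+1}, Y_{n-2k}] = L_n` for `0 ≤ k ≤ (n-1)/2` and `[X_{2k+2}, Y_{n-2k-1}] = L_n′` for
`0 ≤ k ≤ (n-2)/2`.  The braided brackets here are
`[X_{2k+1}, Y_{n-2k}] = X_{2k+1}Y_{n-2k} - q⁻¹ Y_{n-2k}X_{2k+1}` and
`[X_{2k+2}, Y_{n-2k-1}] = X_{2k+2}Y_{n-2k-1} - (-1)^(n-1) q⁻¹ Y_{n-2k-1}X_{2k+2}`. -/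
theorem stmt2 (q : ℂ) (hq0 : q ≠ 0) (hq : NotRootOfUnity q) (n : ℕ) (hn : 1 ≤ n)
    (h : ∀ j : ℕ, 1 ≤ j → j ≤ n - 2 → L q j * (L q 1)^2 = (L q 1)^2 * L q j) :
    (∀ k : ℕ, 2*k+1 ≤ n →
      X q (2*k+1) * Y q (n - 2*k) - q⁻¹ • (Y q (n - 2*k) * X q (2*k+1)) = L q n) ∧
    (∀ k : ℕ, 2*k+2 ≤ n →
      X q (2*k+2) * Y q (n - 2*k - 1) - ((-1 : ℂ)^(n-1) * q⁻¹) • (Y q (n - 2*k - 1) * X q (2*k+2))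
        = L' q n) :=
  stmt2_general q n h
end
end

section
/- In U = U_q(A(0,2)^{(4)})^+ the following identities hold (all four brackets are plain commutators, the braiding scalars being 1): [X₂, L₂] = q·X₄ + θ·L₁X₃; [X₂, L₂′] = (q−2)X₄ + θ·L₁X₃; [L₂, Y₂] = (q+2)Y₄ − θ·Y₃L₁; [L₂′, Y₂] = q·Y₄ − θ·Y₃L₁. -/
noncomputable section

open QAff

/-!
The relations `L₂ − L₂′ = 2L₁²`, `X₄ = [X₂, L₁²]` and `Y₄ = [L₁², Y₂]` need no Serre relation
and reduce the identities for `[X₂, L₂′]` and `[L₂, Y₂]` to those for `[X₂, L₂]` and `[L₂′, Y₂]`.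
For the latter two, lifted to the free algebra, `q³(1 + q + q²)` resp. `q³(1 − q + q²)` times the
defect is an explicit two-sided combination of the Serre relators; these scalars are nonzero
because `q` is not a third or sixth root of unity.
-/

namespace QAff

theorem one_add_add_sq_ne_zero {R : Type*} [CommRing R] {q : R} (h : q ^ 3 ≠ 1) :
    1 + q + q ^ 2 ≠ 0 := fun h0 ↦ h (by linear_combination (q - 1) * h0)

theorem one_sub_add_sq_ne_zero {R : Type*} [CommRing R] {q : R} (h : q ^ 6 ≠ 1) :
    1 - q + q ^ 2 ≠ 0 := fun h0 ↦ h (by linear_combination (q + 1) * (q ^ 3 - 1) * h0)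

section FreeAlgebra

variable (q : ℂ)

def X3F : F := X2F q * L1F q + L1F q * X2F q
def X4F : F := X3F q * L1F q - L1F q * X3F q
def Y3F : F := L1F q * Y2F q - Y2F q * L1F q
def Y4F : F := L1F q * Y3F q + Y3F q * L1F q
def L2F : F := x1 * Y2F q - q⁻¹ • (Y2F q * x1)
def L2'F : F := X2F q * x2 + q⁻¹ • (x2 * X2F q)

/- The coefficients of the two certificates below solve the linear system in the multidegree
`(4,3)`, resp. `(3,4)`, component of the free algebra. -/

set_option maxHeartbeats 4000000 in
theorem smul_X2F_comm_L2F_sub (hq0 : q ≠ 0) :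
    (q ^ 3 * (1 + q + q ^ 2)) •
      (X2F q * L2F q - L2F q * X2F q - (q • X4F q + θ q • (L1F q * X3F q))) =
    (q ^ 2 + q ^ 3) • (serre1 q * x2 * x2 * x1)
    + (q ^ 3 - q ^ 4 + q ^ 5) • (serre1 q * x2 * x1 * x2)
    + (-2 * q ^ 4) • (serre1 q * x1 * x2 * x2)
    + (1 - q - q ^ 3) • (x2 * serre1 q * x2 * x1)
    + (-q + q ^ 2 + q ^ 3) • (x2 * serre1 q * x1 * x2)
    + (-q) • (x2 * x2 * serre1 q * x1)
    + (-q ^ 4) • (x1 * serre1 q * x2 * x2)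
    + (q ^ 2 + q ^ 3 - q ^ 4) • (x2 * x1 * serre1 q * x2)
    + (-q ^ 2 - q ^ 4 + q ^ 5) • (x1 * x2 * serre1 q * x2)
    + (-2 * q) • (x2 * x2 * x1 * serre1 q)
    + (1 - q + q ^ 2) • (x2 * x1 * x2 * serre1 q)
    + (q ^ 2 + q ^ 3) • (x1 * x2 * x2 * serre1 q)
    + (-q) • (serre2 q * x1 * x1 * x1)
    + (q + q ^ 2 + q ^ 3) • (x1 * serre2 q * x1 * x1)
    + (-q ^ 2 - q ^ 3 - q ^ 4) • (x1 * x1 * serre2 q * x1)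
    + q ^ 4 • (x1 * x1 * x1 * serre2 q) := by
  simp only [X4F, X3F, X2F, Y2F, L2F, L1F, serre1, serre2, θ, mul_add, add_mul, mul_sub,
    sub_mul, smul_mul_assoc, mul_smul_comm, smul_sub, smul_add, smul_smul, mul_assoc]
  match_scalars <;> field_simp <;> ring

set_option maxHeartbeats 4000000 in
theorem smul_L2'F_comm_Y2F_sub (hq0 : q ≠ 0) :
    (q ^ 3 * (1 - q + q ^ 2)) •
      (L2'F q * Y2F q - Y2F q * L2'F q - (q • Y4F q - θ q • (Y3F q * L1F q))) =
    (-q ^ 4) • (serre1 q * x2 * x2 * x2)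
    + (-q ^ 2 + q ^ 3 - q ^ 4) • (x2 * serre1 q * x2 * x2)
    + (q - q ^ 2 + q ^ 3) • (x2 * x2 * serre1 q * x2)
    + q • (x2 * x2 * x2 * serre1 q)
    + (-2 * q) • (serre2 q * x2 * x1 * x1)
    + (1 + q + q ^ 2) • (serre2 q * x1 * x2 * x1)
    + (-q ^ 2 + q ^ 3) • (serre2 q * x1 * x1 * x2)
    + q • (x2 * serre2 q * x1 * x1)
    + (-q ^ 2 + q ^ 3 + q ^ 4) • (x1 * serre2 q * x2 * x1)
    + (-q ^ 2 - q ^ 4 - q ^ 5) • (x1 * serre2 q * x1 * x2)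
    + (-1 - q - q ^ 3) • (x2 * x1 * serre2 q * x1)
    + (q + q ^ 2 - q ^ 3) • (x1 * x2 * serre2 q * x1)
    + q ^ 4 • (x1 * x1 * serre2 q * x2)
    + (q ^ 2 - q ^ 3) • (x2 * x1 * x1 * serre2 q)
    + (q ^ 3 + q ^ 4 + q ^ 5) • (x1 * x2 * x1 * serre2 q)
    + (-2 * q ^ 4) • (x1 * x1 * x2 * serre2 q) := by
  simp only [Y4F, Y3F, Y2F, X2F, L2'F, L1F, serre1, serre2, θ, mul_add, add_mul, mul_sub,
    sub_mul, smul_mul_assoc, mul_smul_comm, smul_sub, smul_add, smul_smul, mul_assoc]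
  match_scalars <;> field_simp <;> ring

end FreeAlgebra

section Quotient

variable {q : ℂ}

theorem π_serre1 : π q (serre1 q) = 0 := (RingQuot.mkAlgHom_rel ℂ Rel.one).trans (map_zero _)

theorem π_serre2 : π q (serre2 q) = 0 := (RingQuot.mkAlgHom_rel ℂ Rel.two).trans (map_zero _)

theorem L_one : L q 1 = L1U q := rfl

theorem X_two : X q 2 = π q x1 * L1U q - L1U q * π q x1 := by
  simp only [X]; module

theorem X_three : X q 3 = X q 2 * L1U q + L1U q * X q 2 := by
  simp only [X]; module

theorem X_four : X q 4 = X q 3 * L1U q - L1U q * X q 3 := by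
  simp only [X]; module

theorem Y_two : Y q 2 = L1U q * π q x2 + π q x2 * L1U q := by
  simp only [Y]; module

theorem Y_three : Y q 3 = L1U q * Y q 2 - Y q 2 * L1U q := by
  simp only [Y]; module

theorem Y_four : Y q 4 = L1U q * Y q 3 + Y q 3 * L1U q := by
  simp only [Y]; module

theorem L_two : L q 2 = π q x1 * Y q 2 - q⁻¹ • (Y q 2 * π q x1) := rfl

theorem L'_two : L' q 2 = X q 2 * π q x2 + q⁻¹ • (π q x2 * X q 2) := by
  simp only [L', Y]; module

theorem π_L1F : π q (L1F q) = L1U q := by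
  simp [L1F, L1U]

theorem π_X2F : π q (X2F q) = X q 2 := by
  simp [X2F, X_two, π_L1F]

theorem π_X3F : π q (X3F q) = X q 3 := by
  simp [X3F, X_three, π_X2F, π_L1F]

theorem π_X4F : π q (X4F q) = X q 4 := by
  simp [X4F, X_four, π_X3F, π_L1F]

theorem π_Y2F : π q (Y2F q) = Y q 2 := by
  simp [Y2F, Y_two, π_L1F]

theorem π_Y3F : π q (Y3F q) = Y q 3 := by
  simp [Y3F, Y_three, π_Y2F, π_L1F]

theorem π_Y4F : π q (Y4F q) = Y q 4 := by
  simp [Y4F, Y_four, π_Y3F, π_L1F]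

theorem π_L2F : π q (L2F q) = L q 2 := by
  simp [L2F, L_two, π_Y2F]

theorem π_L2'F : π q (L2'F q) = L' q 2 := by
  simp [L2'F, L'_two, π_X2F]

theorem L'_two_eq_sub_sq : L' q 2 = L q 2 - (2 : ℂ) • L q 1 ^ 2 := by
  simp only [L'_two, L_two, X_two, Y_two, L_one, L1U, sq, mul_add, add_mul, mul_sub, sub_mul,
    smul_mul_assoc, mul_smul_comm, smul_sub, smul_add, smul_smul, mul_assoc]
  module

theorem X_four_eq_comm_sq : X q 4 = X q 2 * L q 1 ^ 2 - L q 1 ^ 2 * X q 2 := by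
  rw [X_four, X_three, L_one, sq]
  simp only [mul_add, add_mul, mul_assoc]
  abel

theorem Y_four_eq_comm_sq : Y q 4 = L q 1 ^ 2 * Y q 2 - Y q 2 * L q 1 ^ 2 := by
  rw [Y_four, Y_three, L_one, sq]
  simp only [mul_sub, sub_mul, mul_assoc]
  abel

theorem X_two_comm_L_two (hq0 : q ≠ 0) (h : 1 + q + q ^ 2 ≠ 0) :
    X q 2 * L q 2 - L q 2 * X q 2 = q • X q 4 + θ q • (L q 1 * X q 3) := by
  have key := congrArg (π q) (smul_X2F_comm_L2F_sub q hq0)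
  simp only [map_add, map_sub, map_smul, map_mul, π_serre1, π_serre2, π_X2F, π_X3F, π_X4F,
    π_L2F, π_L1F, ← L_one, mul_zero, zero_mul, smul_zero, add_zero] at key
  exact sub_eq_zero.mp ((smul_eq_zero.mp key).resolve_left (mul_ne_zero (pow_ne_zero 3 hq0) h))

theorem L'_two_comm_Y_two (hq0 : q ≠ 0) (h : 1 - q + q ^ 2 ≠ 0) :
    L' q 2 * Y q 2 - Y q 2 * L' q 2 = q • Y q 4 - θ q • (Y q 3 * L q 1) := by
  have key := congrArg (π q) (smul_L2'F_comm_Y2F_sub q hq0)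
  simp only [map_add, map_sub, map_smul, map_mul, π_serre1, π_serre2, π_Y2F, π_Y3F, π_Y4F,
    π_L2'F, π_L1F, ← L_one, mul_zero, zero_mul, smul_zero, add_zero] at key
  exact sub_eq_zero.mp ((smul_eq_zero.mp key).resolve_left (mul_ne_zero (pow_ne_zero 3 hq0) h))

theorem X_two_comm_L'_two (hq0 : q ≠ 0) (h : 1 + q + q ^ 2 ≠ 0) :
    X q 2 * L' q 2 - L' q 2 * X q 2 = (q - 2) • X q 4 + θ q • (L q 1 * X q 3) := by
  have hL := X_two_comm_L_two hq0 h
  rw [L'_two_eq_sub_sq, mul_sub, sub_mul, mul_smul_comm, smul_mul_assoc]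
  linear_combination (norm := module) hL + (2 : ℂ) • X_four_eq_comm_sq (q := q)

theorem L_two_comm_Y_two (hq0 : q ≠ 0) (h : 1 - q + q ^ 2 ≠ 0) :
    L q 2 * Y q 2 - Y q 2 * L q 2 = (q + 2) • Y q 4 - θ q • (Y q 3 * L q 1) := by
  have hL' := L'_two_comm_Y_two hq0 h
  rw [L'_two_eq_sub_sq, sub_mul, mul_sub, mul_smul_comm, smul_mul_assoc] at hL'
  linear_combination (norm := module) hL' - (2 : ℂ) • Y_four_eq_comm_sq (q := q)

end Quotient

end QAff

/-- In `U = U_q(A(0,2)^{(4)})^+`: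
`[X₂, L₂] = qX₄ + θL₁X₃`, `[X₂, L₂′] = (q-2)X₄ + θL₁X₃`,
`[L₂, Y₂] = (q+2)Y₄ - θY₃L₁`, `[L₂′, Y₂] = qY₄ - θY₃L₁` (all plain commutators). -/
theorem stmt6 (q : ℂ) (hq0 : q ≠ 0) (hq : NotRootOfUnity q) :
    (X q 2 * L q 2 - L q 2 * X q 2 = q • X q 4 + θ q • (L q 1 * X q 3)) ∧
    (X q 2 * L' q 2 - L' q 2 * X q 2 = (q - 2) • X q 4 + θ q • (L q 1 * X q 3)) ∧
    (L q 2 * Y q 2 - Y q 2 * L q 2 = (q + 2) • Y q 4 - θ q • (Y q 3 * L q 1)) ∧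
    (L' q 2 * Y q 2 - Y q 2 * L' q 2 = q • Y q 4 - θ q • (Y q 3 * L q 1)) := by
  have h3 := one_add_add_sq_ne_zero (hq 3 three_ne_zero)
  have h6 := one_sub_add_sq_ne_zero (hq 6 (by norm_num))
  exact ⟨X_two_comm_L_two hq0 h3, X_two_comm_L'_two hq0 h3, L_two_comm_Y_two hq0 h6,
    L'_two_comm_Y_two hq0 h6⟩
end
end
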